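/- Let q be a prime power, let M ≥ 1 and n_v ≥ 1 be integers, let b_1, …, b_{n_v} be nonnegative integers with b_j ≥ 1 for a fixed index j, let d = ∑_{j′=1}^{n_v} b_{j′}, and let h = (h_0, …, h_M) be a probability vector. Define g_j(x, h) = 1 − ∑_{r=1}^M h_r ∑_{s=0}^{min(d−1, r−1)} Ω(j, s, x) ζ_{s+1}^r for x ∈ (0,1]^{n_v}. Then g_j(x, h) is nondecreasing in x on (0, 1]^{n_v}, i.e., if x, x̃ ∈ (0,1]^{n_v} with x_t ≤ x̃_t for all t, then g_j(x, h) ≤ g_j(x̃, h). -/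

import Mathlib

/-- `ζ_r^m = ∏_{i=0}^{r-1} (1 - q^{-m+i})`. -/
noncomputable def zeta (q r m : ℕ) : ℝ :=
  ∏ i ∈ Finset.range r, (1 - (q : ℝ) ^ ((i : ℤ) - (m : ℤ)))

/-- `Ω(j, s, x)`: the probability that `s` of the `d−1` incoming messages of a batch check
node are erased, where the incoming messages consist of `b_{j′}` independent erasures with
probability `x_{j′}` for each `j′ ≠ j` and `b_j − 1` independent erasures with probability
`x_j`.  It is the sum, over all tuples `(k_t)` with `0 ≤ k_{j′} ≤ b_{j′}` for `j′ ≠ j`,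
`0 ≤ k_j ≤ b_j − 1`, and `∑ k_t = s`, of
`[∏_{j′≠j} C(b_{j′},k_{j′}) x_{j′}^{k_{j′}} (1−x_{j′})^{b_{j′}−k_{j′}}] ·
 C(b_j−1,k_j) x_j^{k_j} (1−x_j)^{b_j−1−k_j}`. -/
noncomputable def OmegaBCN {nv : ℕ} (b : Fin nv → ℕ) (j : Fin nv) (s : ℕ)
    (x : Fin nv → ℝ) : ℝ :=
  ∑ k : (∀ t : Fin nv, Fin ((if t = j then b t - 1 else b t) + 1)),
    if (∑ t, ((k t : ℕ))) = s then
      ∏ t, ((Nat.choose (if t = j then b t - 1 else b t) (k t : ℕ) : ℝ) *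
        x t ^ (k t : ℕ) * (1 - x t) ^ ((if t = j then b t - 1 else b t) - (k t : ℕ)))
    else 0

/-- The exact batch-check-node update function of density evolution:
`g_j(x, h) = 1 − ∑_{r=1}^M h_r ∑_{s=0}^{min(d−1,r−1)} Ω(j,s,x) ζ_{s+1}^r`,
where `d = ∑_{j′} b_{j′}`. -/
noncomputable def gBCN (q M : ℕ) {nv : ℕ} (b : Fin nv → ℕ) (j : Fin nv)
    (h : ℕ → ℝ) (x : Fin nv → ℝ) : ℝ :=
  1 - ∑ r ∈ Finset.Icc 1 M, h r *
    ∑ s ∈ Finset.range (min ((∑ j', b j') - 1) (r - 1) + 1),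
      OmegaBCN b j s x * zeta q (s + 1) r


open Finset

noncomputable def wB (n k : ℕ) (y : ℝ) : ℝ := (n.choose k : ℝ) * y ^ k * (1 - y) ^ (n - k)

lemma wB_nonneg {n k : ℕ} {y : ℝ} (h0 : 0 ≤ y) (h1 : y ≤ 1) : 0 ≤ wB n k y := by
  have h2 : (0:ℝ) ≤ 1 - y := by linarith
  exact mul_nonneg (mul_nonneg (Nat.cast_nonneg _) (pow_nonneg h0 _)) (pow_nonneg h2 _)

noncomputable def fB (n : ℕ) (A : ℕ → ℝ) (y : ℝ) : ℝ :=
  ∑ k ∈ range (n + 1), wB n k y * A k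

lemma fB_succ (n : ℕ) (A : ℕ → ℝ) (y : ℝ) :
    fB (n + 1) A y = (1 - y) * fB n A y + y * fB n (fun k => A (k + 1)) y := by
  set G : ℕ → ℝ := fun m => (n.choose m : ℝ) * y^m * (1-y)^(n+1-m) * A m with hG
  have e1 : fB (n+1) A y
      = ∑ k ∈ range (n+1), wB (n+1) (k+1) y * A (k+1) + wB (n+1) 0 y * A 0 := by
    rw [fB, Finset.sum_range_succ']
  have e2 : ∀ k ∈ range (n+1), wB (n+1) (k+1) y * A (k+1)
      = y * (wB n k y * A (k+1)) + G (k+1) := by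
    intro k hk
    have h3 : n + 1 - (k+1) = n - k := by omega
    simp only [wB, Nat.choose_succ_succ, Nat.succ_sub_succ, hG, h3, Nat.succ_eq_add_one]
    push_cast
    ring
  rw [e1, Finset.sum_congr rfl e2, Finset.sum_add_distrib, ← Finset.mul_sum]
  have e3 : (∑ k ∈ range (n+1), G (k+1)) + wB (n+1) 0 y * A 0
      = (1 - y) * fB n A y := by
    have h0 : wB (n+1) 0 y * A 0 = G 0 := by simp [wB, hG]
    rw [h0, ← Finset.sum_range_succ']
    rw [Finset.sum_range_succ]
    have hz : G (n+1) = 0 := by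
      simp [hG, Nat.choose_eq_zero_of_lt]
    rw [hz, add_zero, fB, Finset.mul_sum]
    apply Finset.sum_congr rfl
    intro k hk
    have hk' : k < n + 1 := Finset.mem_range.1 hk
    have h4 : n + 1 - k = (n - k) + 1 := by omega
    simp only [hG, wB, h4, pow_succ]
    ring
  rw [add_assoc, e3, add_comm]
  congr 1


lemma fB_mono {n : ℕ} {A B : ℕ → ℝ} {y : ℝ} (h0 : 0 ≤ y) (h1 : y ≤ 1)
    (hAB : ∀ k, A k ≤ B k) : fB n A y ≤ fB n B y := by
  apply Finset.sum_le_sum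
  intro k _
  exact mul_le_mul_of_nonneg_left (hAB k) (wB_nonneg h0 h1)

lemma fB_anti (n : ℕ) (A : ℕ → ℝ) (hA : ∀ k, A (k + 1) ≤ A k)
    {y y' : ℝ} (h0 : 0 ≤ y) (hyy : y ≤ y') (h1 : y' ≤ 1) :
    fB n A y' ≤ fB n A y := by
  induction n generalizing A with
  | zero => simp [fB, wB]
  | succ n ih =>
    rw [fB_succ, fB_succ]
    have ha : fB n A y' ≤ fB n A y := ih A hA
    have hb : fB n (fun k => A (k+1)) y' ≤ fB n (fun k => A (k+1)) y :=
      ih _ (fun k => hA (k+1))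
    have hab : fB n (fun k => A (k+1)) y' ≤ fB n A y' :=
      fB_mono (le_trans h0 hyy) h1 hA
    nlinarith [mul_nonneg (sub_nonneg.2 hyy) (sub_nonneg.2 hab),
      mul_nonneg h0 (sub_nonneg.2 hb),
      mul_nonneg (by linarith : (0:ℝ) ≤ 1 - y) (sub_nonneg.2 ha)]

/-- Multivariate binomial expectation. -/
noncomputable def SB (n : ℕ) (c : Fin n → ℕ) (φ : ℕ → ℝ) (x : Fin n → ℝ) : ℝ :=
  ∑ k : (∀ t : Fin n, Fin (c t + 1)),
    (∏ t, wB (c t) (k t) (x t)) * φ (∑ t, ((k t : ℕ)))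

lemma SB_succ (n : ℕ) (c : Fin (n + 1) → ℕ) (φ : ℕ → ℝ) (x : Fin (n + 1) → ℝ) :
    SB (n + 1) c φ x = ∑ k0 : Fin (c 0 + 1),
      wB (c 0) (k0 : ℕ) (x 0) *
        SB n (fun t => c t.succ) (fun s => φ ((k0 : ℕ) + s)) (fun t => x t.succ) := by
  rw [SB]
  rw [← Equiv.sum_comp (Fin.consEquiv (fun t : Fin (n+1) => Fin (c t + 1)))]
  rw [Fintype.sum_prod_type]
  apply Finset.sum_congr rfl
  intro k0 _
  rw [SB, Finset.mul_sum]
  apply Finset.sum_congr rfl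
  intro k _
  have hp : ∏ t, wB (c t) ((Fin.consEquiv (fun t : Fin (n+1) => Fin (c t + 1)) (k0, k)) t : ℕ) (x t)
      = wB (c 0) (k0 : ℕ) (x 0) * ∏ t : Fin n, wB (c t.succ) ((k t : ℕ)) (x t.succ) := by
    rw [Fin.prod_univ_succ]
    simp [Fin.consEquiv]
  have hs : (∑ t, (((Fin.consEquiv (fun t : Fin (n+1) => Fin (c t + 1)) (k0, k)) t : ℕ)))
      = (k0 : ℕ) + ∑ t : Fin n, (k t : ℕ) := by
    rw [Fin.sum_univ_succ]
    simp [Fin.consEquiv]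
  rw [hp, hs]
  ring

lemma SB_mono {n : ℕ} {c : Fin n → ℕ} {φ ψ : ℕ → ℝ} {x : Fin n → ℝ}
    (hx : ∀ t, 0 ≤ x t ∧ x t ≤ 1) (hφψ : ∀ s, φ s ≤ ψ s) :
    SB n c φ x ≤ SB n c ψ x := by
  apply Finset.sum_le_sum
  intro k _
  apply mul_le_mul_of_nonneg_left (hφψ _)
  exact Finset.prod_nonneg fun t _ => wB_nonneg (hx t).1 (hx t).2

lemma SB_anti (n : ℕ) (c : Fin n → ℕ) (φ : ℕ → ℝ) (hφ : ∀ s, φ (s + 1) ≤ φ s)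
    (x xt : Fin n → ℝ) (hx : ∀ t, 0 ≤ x t ∧ x t ≤ 1) (hxt : ∀ t, 0 ≤ xt t ∧ xt t ≤ 1)
    (hle : ∀ t, x t ≤ xt t) : SB n c φ xt ≤ SB n c φ x := by
  induction n generalizing φ with
  | zero =>
    simp [SB]
  | succ n ih =>
    rw [SB_succ, SB_succ]
    have hφ' : ∀ m s, φ (m + (s+1)) ≤ φ (m + s) := fun m s => hφ (m + s)
    have hbridge : ∀ (z : Fin (n+1) → ℝ) (A : ℕ → ℝ),
        (∑ k0 : Fin (c 0 + 1), wB (c 0) (k0 : ℕ) (z 0) * A (k0 : ℕ))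
        = fB (c 0) A (z 0) := by
      intro z A
      rw [fB, ← Fin.sum_univ_eq_sum_range (fun k => wB (c 0) k (z 0) * A k) (c 0 + 1)]
    rw [hbridge xt (fun m => SB n (fun t => c t.succ) (fun s => φ (m + s)) (fun t => xt t.succ)),
        hbridge x (fun m => SB n (fun t => c t.succ) (fun s => φ (m + s)) (fun t => x t.succ))]
    have step1 : fB (c 0)
        (fun m => SB n (fun t => c t.succ) (fun s => φ (m + s)) (fun t => xt t.succ)) (xt 0)
        ≤ fB (c 0)
        (fun m => SB n (fun t => c t.succ) (fun s => φ (m + s)) (fun t => xt t.succ)) (x 0) := by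
      apply fB_anti
      · intro m
        apply SB_mono (fun t => hxt t.succ)
        intro s
        have h : m + 1 + s = m + (s + 1) := by omega
        rw [h]
        exact hφ' m s
      · exact (hx 0).1
      · exact hle 0
      · exact (hxt 0).2
    have step2 : fB (c 0)
        (fun m => SB n (fun t => c t.succ) (fun s => φ (m + s)) (fun t => xt t.succ)) (x 0)
        ≤ fB (c 0)
        (fun m => SB n (fun t => c t.succ) (fun s => φ (m + s)) (fun t => x t.succ)) (x 0) := by
      apply fB_mono (hx 0).1 (hx 0).2
      intro m
      exact ih (fun t => c t.succ) (fun s => φ (m + s)) (hφ' m)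
        (fun t => x t.succ) (fun t => xt t.succ)
        (fun t => hx t.succ) (fun t => hxt t.succ) (fun t => hle t.succ)
    exact le_trans step1 step2



lemma zeta_eq_zero {q m r : ℕ} (h : r < m) : zeta q m r = 0 := by
  rw [zeta]
  apply Finset.prod_eq_zero (Finset.mem_range.2 h)
  simp

lemma zeta_nonneg {q : ℕ} (hq : 1 ≤ q) (m r : ℕ) : 0 ≤ zeta q m r := by
  by_cases h : m ≤ r
  · apply Finset.prod_nonneg
    intro i hi
    have hi' : i < m := Finset.mem_range.1 hi
    have hle : (q:ℝ) ^ ((i : ℤ) - (r : ℤ)) ≤ 1 := by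
      apply zpow_le_one_of_nonpos₀
      · exact_mod_cast hq
      · omega
    linarith
  · rw [zeta_eq_zero (by omega)]

lemma zeta_anti {q : ℕ} (hq : 1 ≤ q) (m r : ℕ) : zeta q (m + 1) r ≤ zeta q m r := by
  rw [zeta, Finset.prod_range_succ, ← zeta]
  apply mul_le_of_le_one_right (zeta_nonneg hq m r)
  have : (0:ℝ) ≤ (q:ℝ) ^ ((m : ℤ) - (r : ℤ)) := by positivity
  linarith

lemma inner_eq (q r : ℕ) {nv : ℕ} (b : Fin nv → ℕ) (j : Fin nv) (hbj : 1 ≤ b j)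
    (x : Fin nv → ℝ) :
    ∑ s ∈ Finset.range (min ((∑ j', b j') - 1) (r - 1) + 1),
      OmegaBCN b j s x * zeta q (s + 1) r
    = SB nv (fun t => if t = j then b t - 1 else b t) (fun s => zeta q (s + 1) r) x := by
  have hD : 1 ≤ ∑ j', b j' :=
    le_trans hbj (Finset.single_le_sum (fun i _ => Nat.zero_le (b i)) (Finset.mem_univ j))
  set D := ∑ j', b j' with hDdef
  have hsub : Finset.range (min (D - 1) (r - 1) + 1) ⊆ Finset.range D := by
    apply Finset.range_subset_range.2
    have := min_le_left (D - 1) (r - 1)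
    omega
  have hzero : ∀ s ∈ Finset.range D, s ∉ Finset.range (min (D - 1) (r - 1) + 1) →
      OmegaBCN b j s x * zeta q (s + 1) r = 0 := by
    intro s hs hns
    have h1 : s < D := Finset.mem_range.1 hs
    have h2 : ¬ s < min (D - 1) (r - 1) + 1 := fun hc => hns (Finset.mem_range.2 hc)
    have h3 : r < s + 1 := by
      have := min_le_left (D - 1) (r - 1)
      have := min_le_right (D - 1) (r - 1)
      rcases le_total (D - 1) (r - 1) with h | h <;> omega
    rw [zeta_eq_zero h3, mul_zero]
  rw [Finset.sum_subset hsub hzero]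
  have step1 : ∀ s ∈ Finset.range D, OmegaBCN b j s x * zeta q (s + 1) r
      = ∑ k : (∀ t : Fin nv, Fin ((if t = j then b t - 1 else b t) + 1)),
        if (∑ t, ((k t : ℕ))) = s then
          (∏ t, ((Nat.choose (if t = j then b t - 1 else b t) (k t : ℕ) : ℝ) *
            x t ^ (k t : ℕ) * (1 - x t) ^ ((if t = j then b t - 1 else b t) - (k t : ℕ))))
          * zeta q (s + 1) r
        else 0 := by
    intro s _
    rw [OmegaBCN, Finset.sum_mul]
    apply Finset.sum_congr rfl
    intro k _
    rw [ite_mul, zero_mul]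
  rw [Finset.sum_congr rfl step1, Finset.sum_comm]
  have step2 : ∀ k : (∀ t : Fin nv, Fin ((if t = j then b t - 1 else b t) + 1)),
      (∑ t, (k t : ℕ)) < D := by
    intro k
    have h2 : ∑ t, (k t : ℕ) ≤ ∑ t, (if t = j then b t - 1 else b t) :=
      Finset.sum_le_sum (fun t _ => Fin.is_le (k t))
    have h3 : ∑ t, (if t = j then b t - 1 else b t) < ∑ t, b t := by
      apply Finset.sum_lt_sum (fun i _ => by split <;> omega)
      exact ⟨j, Finset.mem_univ j, by simp; omega⟩
    omega
  rw [SB]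
  apply Finset.sum_congr rfl
  intro k _
  have hk : (∑ t, (k t : ℕ)) ∈ Finset.range D := Finset.mem_range.2 (step2 k)
  rw [Finset.sum_ite_eq (Finset.range D) (∑ t, (k t : ℕ))
    (fun s => (∏ t, ((Nat.choose (if t = j then b t - 1 else b t) (k t : ℕ) : ℝ) *
      x t ^ (k t : ℕ) * (1 - x t) ^ ((if t = j then b t - 1 else b t) - (k t : ℕ))))
      * zeta q (s + 1) r), if_pos hk]
  rfl

/-- The exact batch-check-node update function `g_j(·, h)` is
nondecreasing on `(0, 1]^{n_v}` with respect to the componentwise order. -/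
theorem gBCN_monotone_in_x
    (q M nv : ℕ) (hq : IsPrimePow q) (hM : 1 ≤ M) (hnv : 1 ≤ nv)
    (b : Fin nv → ℕ) (j : Fin nv) (hbj : 1 ≤ b j)
    (h : ℕ → ℝ) (hpos : ∀ r, r ≤ M → 0 ≤ h r)
    (hsum : ∑ r ∈ Finset.range (M + 1), h r = 1)
    (x xt : Fin nv → ℝ)
    (hx : ∀ t, 0 < x t ∧ x t ≤ 1) (hxt : ∀ t, 0 < xt t ∧ xt t ≤ 1)
    (hle : ∀ t, x t ≤ xt t) :
    gBCN q M b j h x ≤ gBCN q M b j h xt := by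
  have hq1 : 1 ≤ q := le_trans one_le_two hq.two_le
  rw [gBCN, gBCN]
  have key : ∑ r ∈ Finset.Icc 1 M, h r *
      ∑ s ∈ Finset.range (min ((∑ j', b j') - 1) (r - 1) + 1),
        OmegaBCN b j s xt * zeta q (s + 1) r
      ≤ ∑ r ∈ Finset.Icc 1 M, h r *
      ∑ s ∈ Finset.range (min ((∑ j', b j') - 1) (r - 1) + 1),
        OmegaBCN b j s x * zeta q (s + 1) r := by
    apply Finset.sum_le_sum
    intro r hr
    have hrM : r ≤ M := (Finset.mem_Icc.1 hr).2
    apply mul_le_mul_of_nonneg_left _ (hpos r hrM)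
    rw [inner_eq q r b j hbj x, inner_eq q r b j hbj xt]
    apply SB_anti
    · intro s
      exact zeta_anti hq1 (s + 1) r
    · exact fun t => ⟨le_of_lt (hx t).1, (hx t).2⟩
    · exact fun t => ⟨le_of_lt (hxt t).1, (hxt t).2⟩
    · exact hle
  linarith
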